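/- For every word w over a finite alphabet A, ι(w) = max{ n ∈ ℕ | αⁿ(0) is defined }, where α is the arch-jumping function of w and αⁿ denotes its n-fold iteration. -/

import Mathlib

/-!
A word `l` is `(n+1)`-universal iff the shortest prefix `l.take k` containing every letter
exists and `l.drop k` is `n`-universal. Indeed, the first letter of any word embeds inside that
prefix. Conversely, some letter `b` is missing from `l.take (k - 1)`, so any embedding of `b :: v`
places `b` at position `k - 1` or later, and `v` must then embed into `l.drop k`. Since `α` jumps
exactly over these shortest prefixes, induction on `n` shows that `w(i, L)` is `n`-universal iff
`αⁿ(i)` is defined.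
-/

/-- The subword universality index `ι(u)`: the largest `k` such that every word of
length `k` over the alphabet `A` is a subword (subsequence) of `u`. -/
noncomputable def univIndex {A : Type*} (u : List A) : ℕ :=
  sSup {k : ℕ | ∀ w : List A, w.length = k → w.Sublist u}

open Classical in
/-- The arch-jumping function `α` of a word `w`: `α(i)` is the least `j` such that the
factor `w(i,j)` contains every letter of the alphabet `A`, undefined if no such `j` exists. -/
noncomputable def alphaJump {A : Type*} (w : List A) (i : ℕ) : Option ℕ :=
  if ∃ j, ∀ a : A, a ∈ (w.take j).drop i then
    some (sInf {j : ℕ | ∀ a : A, a ∈ (w.take j).drop i})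
  else none

/-- `αⁿ(i)`: the `n`-fold iteration of the arch-jumping function `α` of `w`, starting
from position `i`; `none` if some intermediate step is undefined. -/
noncomputable def alphaIter {A : Type*} (w : List A) (n i : ℕ) : Option ℕ :=
  (fun o => o.bind (alphaJump w))^[n] (some i)

namespace List

variable {α : Type*}

def IsUniversal (l : List α) (n : ℕ) : Prop :=
  ∀ v : List α, v.length = n → v.Sublist l

theorem isUniversal_zero (l : List α) : l.IsUniversal 0 := by
  intro v hv
  simp [length_eq_zero_iff.mp hv]

theorem not_isUniversal_succ_of_not_mem {l : List α} {a : α} (ha : a ∉ l) (n : ℕ) :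
    ¬ l.IsUniversal (n + 1) :=
  fun h => ha ((h (replicate (n + 1) a) length_replicate).subset (by simp))

theorem sublist_drop_of_cons_sublist_of_not_mem_take {b : α} {v l : List α} {k : ℕ}
    (h : (b :: v).Sublist l) (hb : b ∉ l.take k) : v.Sublist (l.drop (k + 1)) := by
  obtain ⟨r₁, r₂, rfl, hb₁, hv⟩ := cons_sublist_iff.mp h
  have hk : k < r₁.length := by
    by_contra! hle
    exact hb (by simpa [take_append, take_of_length_le hle] using Or.inl hb₁)
  calc v.Sublist r₂ := hv
    _ = (r₁ ++ r₂).drop r₁.length := by simp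
    _ <+ (r₁ ++ r₂).drop (k + 1) := drop_sublist_drop_left _ hk

theorem isUniversal_succ_iff_of_isLeast [Nonempty α] {l : List α} {k : ℕ}
    (hk : IsLeast {k | ∀ a : α, a ∈ l.take k} k) (n : ℕ) :
    l.IsUniversal (n + 1) ↔ (l.drop k).IsUniversal n := by
  constructor
  · have hk₀ : k ≠ 0 := by
      rintro rfl
      simpa using hk.1 (Classical.arbitrary α)
    obtain ⟨b, hb⟩ : ∃ b, b ∉ l.take (k - 1) := by
      by_contra! hall
      exact absurd (hk.2 hall) (by omega)
    intro h v hv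
    have := sublist_drop_of_cons_sublist_of_not_mem_take (h (b :: v) (by simp [hv])) hb
    rwa [Nat.sub_add_cancel (Nat.one_le_iff_ne_zero.mpr hk₀)] at this
  · rintro h (_ | ⟨a, v⟩) hv
    · simp at hv
    · exact cons_sublist_iff.mpr
        ⟨_, _, (take_append_drop k l).symm, hk.1 a, h v (by simpa using hv)⟩

end List

open List

section ArchJumping

variable {A : Type*} {w : List A} {i j : ℕ}

theorem alphaIter_zero (w : List A) (i : ℕ) : alphaIter w 0 i = some i := rfl

theorem alphaIter_succ (w : List A) (n i : ℕ) :
    alphaIter w (n + 1) i = (alphaJump w i).bind (alphaIter w n) := by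
  rw [alphaIter, Function.iterate_succ_apply, Option.bind_some]
  cases alphaJump w i with
  | none => exact Function.iterate_fixed rfl n
  | some j => rfl

theorem exists_not_mem_drop_of_alphaJump_eq_none (h : alphaJump w i = none) :
    ∃ a : A, a ∉ w.drop i := by
  unfold alphaJump at h
  split_ifs at h with hex
  push Not at hex
  simpa using hex w.length

theorem isLeast_of_alphaJump_eq_some (h : alphaJump w i = some j) :
    IsLeast {j | ∀ a : A, a ∈ (w.take j).drop i} j := by
  unfold alphaJump at h
  split_ifs at h with hex
  cases Option.some_inj.mp h
  exact ⟨Nat.sInf_mem hex, fun _ => Nat.sInf_le⟩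

theorem exists_isLeast_of_alphaJump_eq_some [Nonempty A] (h : alphaJump w i = some j) :
    ∃ k, j = i + k ∧ IsLeast {k | ∀ a : A, a ∈ (w.drop i).take k} k := by
  have hj := isLeast_of_alphaJump_eq_some h
  have hij : i ≤ j := by
    by_contra! hji
    simpa [drop_eq_nil_of_le ((length_take_le _ _).trans hji.le)] using
      hj.1 (Classical.arbitrary A)
  obtain ⟨k, rfl⟩ := Nat.exists_eq_add_of_le hij
  refine ⟨k, rfl, fun a => ?_, fun k' hk' => ?_⟩
  · rw [take_drop]
    exact hj.1 a
  · have : i + k ≤ i + k' := hj.2 fun a => by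
      rw [← take_drop]
      exact hk' a
    omega

theorem isUniversal_drop_iff_isSome_alphaIter [Nonempty A] (w : List A) (n i : ℕ) :
    (w.drop i).IsUniversal n ↔ (alphaIter w n i).isSome := by
  induction n generalizing i with
  | zero => simp [alphaIter_zero, isUniversal_zero]
  | succ n ih =>
    rw [alphaIter_succ]
    cases h : alphaJump w i with
    | none =>
      obtain ⟨a, ha⟩ := exists_not_mem_drop_of_alphaJump_eq_none h
      simpa using not_isUniversal_succ_of_not_mem ha n
    | some j =>
      obtain ⟨k, rfl, hk⟩ := exists_isLeast_of_alphaJump_eq_some h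
      rw [Option.bind_some, ← ih, isUniversal_succ_iff_of_isLeast hk, drop_drop]

end ArchJumping

theorem univIndex_eq_sSup_alphaIter_general {A : Type*} [Nonempty A] (w : List A) :
    univIndex w = sSup {n : ℕ | (alphaIter w n 0).isSome} := by
  unfold univIndex
  congr 1
  ext n
  have h := isUniversal_drop_iff_isSome_alphaIter w n 0
  rw [drop_zero] at h
  exact h

/-- `ι(w)` equals the largest `n` such that `αⁿ(0)` is defined, where `α` is the
arch-jumping function of `w`. -/
theorem univIndex_eq_sSup_alphaIter {A : Type*} [Fintype A] [Nonempty A] (w : List A) :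
    univIndex w = sSup {n : ℕ | (alphaIter w n 0).isSome} :=
  univIndex_eq_sSup_alphaIter_general w
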